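/- arXiv:1808.10156 — 3 statements merged into one kernel-verified Lean document; each statement's English description precedes it below -/
import Mathlib

section
/- Let $X$ be a compact metric space, $T:X\to X$ a homeomorphism, and $\mu$ a Borel probability measure on $X$ (not necessarily invariant). Let $\alpha$ be a finite Borel partition of $X$ and let $\beta_1 \prec \beta_2 \prec \cdots$ be an increasing sequence of finite Borel partitions. If there is a constant $c$ such that $\lim_{n\to\infty} \frac{-\log\mu((\alpha\vee\beta_n)(x))}{n} = c$ for $\mu$-a.e. $x$, then $\lim_{n\to\infty} \frac{-\log\mu(\beta_n(x))}{n} = c$ for $\mu$-a.e. $x$. -/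
/-! Write `A(x)` for the atom of `α` and `Bₙ(x)` for the atom of `βₙ` containing `x`. Since
`A(x) ∩ Bₙ(x) ⊆ Bₙ(x)`, the rate of `βₙ` is at most that of `α ∨ βₙ`. Conversely, the set where
`μ(Bₙ(x)) ≥ rⁿ μ(A(x) ∩ Bₙ(x))` has measure at most `#α / rⁿ`: inside an atom `A` of `α` it is a
union of sets `A ∩ B`, each of measure at most `μ(B) / rⁿ`. For `r > 1` these bounds are summable,
so by Borel–Cantelli `μ(Bₙ(x)) < rⁿ μ(A(x) ∩ Bₙ(x))` eventually, for a.e. `x`. Letting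
`r = e^ε` with `ε → 0` shows that the two rates differ by `o(1)`. -/

open MeasureTheory Filter Set Topology ENNReal

section Atoms

variable {X κ : Type*} [MeasurableSpace X]

theorem ae_measure_preimage_singleton_ne_zero {ι : Type*} [Countable ι] (μ : Measure X)
    (f : X → ι) : ∀ᵐ x ∂μ, μ (f ⁻¹' {f x}) ≠ 0 := by
  have hnull : {x | μ (f ⁻¹' {f x}) = 0} = ⋃ a ∈ {a | μ (f ⁻¹' {a}) = 0}, f ⁻¹' {a} := by
    ext x; simp
  simp only [ae_iff, ne_eq, not_not, hnull]
  exact (measure_biUnion_null_iff (Set.to_countable {a | μ (f ⁻¹' {a}) = 0})).2 fun a ha => ha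

variable [MeasurableSpace κ] [MeasurableSingletonClass κ] [Countable κ]

theorem measure_inter_setOf_mul_measure_inter_preimage_le (μ : Measure X) (A : Set X)
    {b : X → κ} (hb : Measurable b) {E : ℝ≥0∞} (hE₀ : E ≠ 0) (hE : E ≠ ∞) :
    μ (A ∩ {x | E * μ (A ∩ b ⁻¹' {b x}) ≤ μ (b ⁻¹' {b x})}) ≤ E⁻¹ * μ univ := by
  set C := {c | E * μ (A ∩ b ⁻¹' {c}) ≤ μ (b ⁻¹' {c})}
  calc μ (A ∩ {x | E * μ (A ∩ b ⁻¹' {b x}) ≤ μ (b ⁻¹' {b x})})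
      ≤ μ (⋃ c ∈ C, A ∩ b ⁻¹' {c}) :=
        measure_mono fun x hx => mem_biUnion (x := b x) hx.2 ⟨hx.1, rfl⟩
    _ ≤ ∑' c : C, μ (A ∩ b ⁻¹' {(c : κ)}) := measure_biUnion_le μ C.to_countable _
    _ ≤ ∑' c : C, E⁻¹ * μ (b ⁻¹' {(c : κ)}) :=
        ENNReal.tsum_le_tsum fun c => (ENNReal.mul_le_iff_le_inv hE₀ hE).1 c.2
    _ = E⁻¹ * μ (b ⁻¹' C) := by
        rw [ENNReal.tsum_mul_left,
          tsum_measure_preimage_singleton C.to_countable fun c _ => hb (measurableSet_singleton c)]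
    _ ≤ E⁻¹ * μ univ := by gcongr; exact subset_univ _

theorem measure_setOf_mul_measure_inter_preimage_le {ι : Type*} (μ : Measure X) {α : X → ι}
    (hα : (range α).Finite) {b : X → κ} (hb : Measurable b) {E : ℝ≥0∞} (hE₀ : E ≠ 0)
    (hE : E ≠ ∞) :
    μ {x | E * μ (α ⁻¹' {α x} ∩ b ⁻¹' {b x}) ≤ μ (b ⁻¹' {b x})}
      ≤ hα.toFinset.card * (E⁻¹ * μ univ) := by
  calc μ {x | E * μ (α ⁻¹' {α x} ∩ b ⁻¹' {b x}) ≤ μ (b ⁻¹' {b x})}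
      ≤ μ (⋃ a ∈ hα.toFinset,
          α ⁻¹' {a} ∩ {x | E * μ (α ⁻¹' {a} ∩ b ⁻¹' {b x}) ≤ μ (b ⁻¹' {b x})}) :=
        measure_mono fun x hx =>
          mem_biUnion (hα.mem_toFinset.2 (mem_range_self x)) ⟨rfl, hx⟩
    _ ≤ ∑ a ∈ hα.toFinset,
          μ (α ⁻¹' {a} ∩ {x | E * μ (α ⁻¹' {a} ∩ b ⁻¹' {b x}) ≤ μ (b ⁻¹' {b x})}) :=
        measure_biUnion_finset_le _ _
    _ ≤ ∑ _a ∈ hα.toFinset, E⁻¹ * μ univ :=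
        Finset.sum_le_sum fun a _ => measure_inter_setOf_mul_measure_inter_preimage_le μ _ hb hE₀ hE
    _ = hα.toFinset.card * (E⁻¹ * μ univ) := by rw [Finset.sum_const, nsmul_eq_mul]

theorem ae_eventually_measure_preimage_lt_pow_mul {ι : Type*} (μ : Measure X) [IsFiniteMeasure μ]
    {α : X → ι} (hα : (range α).Finite) {β : ℕ → X → κ} (hβ : ∀ n, Measurable (β n))
    {r : ℝ≥0∞} (hr : 1 < r) (hr_top : r ≠ ∞) :
    ∀ᵐ x ∂μ, ∀ᶠ n in atTop,
      μ (β n ⁻¹' {β n x}) < r ^ n * μ (α ⁻¹' {α x} ∩ β n ⁻¹' {β n x}) := by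
  have hsum : ∑' n, μ {x | r ^ n * μ (α ⁻¹' {α x} ∩ β n ⁻¹' {β n x}) ≤ μ (β n ⁻¹' {β n x})}
      ≠ ∞ := by
    refine ne_top_of_le_ne_top ?_ (ENNReal.tsum_le_tsum fun n =>
      measure_setOf_mul_measure_inter_preimage_le μ hα (hβ n)
        (pow_ne_zero n (zero_lt_one.trans hr).ne') (pow_ne_top hr_top))
    simp_rw [ENNReal.inv_pow, mul_comm _ (μ univ), ENNReal.tsum_mul_left, ENNReal.tsum_geometric]
    exact mul_ne_top (natCast_ne_top _) (mul_ne_top (measure_ne_top μ _)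
      (inv_ne_top.2 (tsub_pos_of_lt (ENNReal.inv_lt_one.2 hr)).ne'))
  filter_upwards [ae_eventually_notMem hsum] with x hx
  exact hx.mono fun n hn => not_le.1 hn

end Atoms

theorem log_toReal_sub_log_toReal_le {a b : ℝ≥0∞} {t : ℝ} {n : ℕ} (ha : a ≠ 0) (hb : b ≠ ∞)
    (hab : a ≤ b) (h : b < ENNReal.ofReal (Real.exp t) ^ n * a) :
    Real.log b.toReal - Real.log a.toReal ≤ n * t := by
  have ha_top : a ≠ ∞ := ne_top_of_le_ne_top hb hab
  have ha_pos : 0 < a.toReal := toReal_pos ha ha_top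
  have hlt : b.toReal < Real.exp t ^ n * a.toReal := by
    have := (toReal_lt_toReal hb (mul_ne_top (pow_ne_top ofReal_ne_top) ha_top)).2 h
    rwa [toReal_mul, toReal_pow, toReal_ofReal (Real.exp_pos t).le] at this
  have := Real.log_lt_log (ha_pos.trans_le (toReal_mono hb hab)) hlt
  rw [Real.log_mul (by positivity) ha_pos.ne', Real.log_pow, Real.log_exp] at this
  linarith

theorem tendsto_div_natCast_zero_of_nonneg_of_eventually_le {d : ℕ → ℝ} (h₀ : ∀ n, 0 ≤ d n)
    (h : ∀ k : ℕ, ∀ᶠ n in atTop, d n ≤ n * (1 / (k + 1))) :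
    Tendsto (fun n => d n / n) atTop (𝓝 0) := by
  refine tendsto_order.2 ⟨fun δ hδ => Eventually.of_forall fun n => hδ.trans_le ?_, fun δ hδ => ?_⟩
  · exact div_nonneg (h₀ n) n.cast_nonneg
  obtain ⟨k, hk⟩ := exists_nat_one_div_lt hδ
  filter_upwards [h k, eventually_gt_atTop 0] with n hn hn₀
  calc d n / n ≤ 1 / (k + 1) := by
        rwa [div_le_iff₀ (by exact_mod_cast hn₀), mul_comm]
    _ < δ := hk

theorem stmt1_general {X : Type*} [MeasurableSpace X]
    (μ : Measure X) [IsProbabilityMeasure μ]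
    (α : X → ℕ) (hαfin : (Set.range α).Finite)
    (β : ℕ → X → ℕ) (hβ : ∀ n, Measurable (β n))
    (c : ℝ)
    (hlim : ∀ᵐ x ∂μ, Tendsto
      (fun n : ℕ => -Real.log ((μ (α ⁻¹' {α x} ∩ (β n) ⁻¹' {β n x})).toReal) / (n : ℝ))
      atTop (𝓝 c)) :
    ∀ᵐ x ∂μ, Tendsto
      (fun n : ℕ => -Real.log ((μ ((β n) ⁻¹' {β n x})).toReal) / (n : ℝ)) atTop (𝓝 c) := by
  have hpos : ∀ᵐ x ∂μ, ∀ n, μ (α ⁻¹' {α x} ∩ β n ⁻¹' {β n x}) ≠ 0 := ae_all_iff.2 fun n => by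
    filter_upwards [ae_measure_preimage_singleton_ne_zero μ fun y => (α y, β n y)] with x hx
    have hatom : (fun y => (α y, β n y)) ⁻¹' {(α x, β n x)} = α ⁻¹' {α x} ∩ β n ⁻¹' {β n x} := by
      ext y; simp [Prod.ext_iff]
    rwa [hatom] at hx
  have hgap : ∀ᵐ x ∂μ, ∀ k : ℕ, ∀ᶠ n in atTop, μ (β n ⁻¹' {β n x})
      < ENNReal.ofReal (Real.exp (1 / (k + 1))) ^ n * μ (α ⁻¹' {α x} ∩ β n ⁻¹' {β n x}) :=
    ae_all_iff.2 fun k => ae_eventually_measure_preimage_lt_pow_mul μ hαfin hβ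
      (one_lt_ofReal.2 (Real.one_lt_exp_iff.2 (by positivity))) ofReal_ne_top
  filter_upwards [hlim, hpos, hgap] with x hx hpos hgap
  have hsub : ∀ n, μ (α ⁻¹' {α x} ∩ β n ⁻¹' {β n x}) ≤ μ (β n ⁻¹' {β n x}) :=
    fun n => measure_mono inter_subset_right
  have hrate : Tendsto (fun n : ℕ => (Real.log (μ (β n ⁻¹' {β n x})).toReal
      - Real.log (μ (α ⁻¹' {α x} ∩ β n ⁻¹' {β n x})).toReal) / n) atTop (𝓝 0) :=
    tendsto_div_natCast_zero_of_nonneg_of_eventually_le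
      (fun n => sub_nonneg.2 (Real.log_le_log (toReal_pos (hpos n) (measure_ne_top μ _))
        (toReal_mono (measure_ne_top μ _) (hsub n))))
      fun k => (hgap k).mono fun n hn =>
        log_toReal_sub_log_toReal_le (hpos n) (measure_ne_top μ _) (hsub n) hn
  have hdiff := hx.sub hrate
  rw [sub_zero] at hdiff
  exact hdiff.congr fun n => by ring

/-- if the exponential decay rate of the atoms of `α ∨ βₙ` is `c` a.e.,
then the exponential decay rate of the atoms of `βₙ` is also `c` a.e.
Finite Borel partitions are encoded as Borel measurable maps to `ℕ` with finite range;
the atom of `γ` containing `x` is `γ ⁻¹' {γ x}`, and the atom of `α ∨ βₙ` containing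
`x` is `α ⁻¹' {α x} ∩ βₙ ⁻¹' {βₙ x}`. -/
theorem stmt1 {X : Type*} [MetricSpace X] [CompactSpace X] [MeasurableSpace X] [BorelSpace X]
    (T : X ≃ₜ X) (μ : Measure X) [IsProbabilityMeasure μ]
    (α : X → ℕ) (hα : Measurable α) (hαfin : (Set.range α).Finite)
    (β : ℕ → X → ℕ) (hβ : ∀ n, Measurable (β n)) (hβfin : ∀ n, (Set.range (β n)).Finite)
    (hmono : ∀ n x y, β (n + 1) x = β (n + 1) y → β n x = β n y)
    (c : ℝ)
    (hlim : ∀ᵐ x ∂μ, Tendsto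
      (fun n : ℕ => -Real.log ((μ (α ⁻¹' {α x} ∩ (β n) ⁻¹' {β n x})).toReal) / (n : ℝ))
      atTop (𝓝 c)) :
    ∀ᵐ x ∂μ, Tendsto
      (fun n : ℕ => -Real.log ((μ ((β n) ⁻¹' {β n x})).toReal) / (n : ℝ)) atTop (𝓝 c) :=
  stmt1_general μ α hαfin β hβ c hlim
end

section
/- Let $\mathbf{a} = (a_k)_{k\ge 0}$ be a sequence of positive reals that sub-exponentially decreases to $0$: $a_k$ is strictly decreasing to $0$, and there exist $C>0$ and positive reals $(b_k)_{k\ge 0}$ with $\lim_{k\to\infty}\frac{1}{k}|\log b_k| = 0$ such that $a_k/a_l \le C\, b_{|k-l|}$ for all $k,l\ge 0$. Let $\mathbb{H}_{\mathbf{a}} = \{(x_n)_{n\in\mathbb{Z}} : \sum_{n\in\mathbb{Z}} a_{|n|}|x_n|^2 < \infty\}$ with norm $\|x\|_{\mathbf{a}}^2 = \sum_n a_{|n|}|x_n|^2$, and let $T$ be the left-shift $(Tx)_n = x_{n+1}$. Then $T$ is a bounded linear operator on $\mathbb{H}_{\mathbf{a}}$, $\|T^k\| > 1$ for each $k\ge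 1$, and the spectral radius of $T$ equals $1$. -/
/-!
Composing with `n ↦ n + k` pushes the weight `a_{|n|}` forward to `a_{|n-k|}`, and
`a_{|n-k|} ≤ C b_j a_{|n|}` with `j ≤ k` gives `‖Tᵏ‖² ≤ C · exp (max_{j ≤ k} |log b_j|)`. The running
maximum of `|log b_j|` is still `o(k)`, so `limsup ‖Tᵏ‖^{1/k} ≤ 1`. Conversely `Tᵏ` maps the unit
vector at `k` to the one at `0`, so `‖Tᵏ‖² ≥ a₀ / a_k > 1`.
-/

open MeasureTheory Filter Set Topology
open scoped ENNReal

/-- The weighted counting measure on `ℤ` with weights `a_{|n|}`; `L²` of this measure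
is the weighted sequence space `ℍ_𝐚 = {x : ∑ₙ a_{|n|} |xₙ|² < ∞}`. -/
noncomputable def muA (a : ℕ → ℝ) : Measure ℤ :=
  Measure.sum fun n : ℤ => ENNReal.ofReal (a n.natAbs) • Measure.dirac n

namespace MeasureTheory

theorem Measure.le_of_forall_singleton_le {α : Type*} [MeasurableSpace α] [Countable α]
    [MeasurableSingletonClass α] {μ ν : Measure α} (h : ∀ x, μ {x} ≤ ν {x}) : μ ≤ ν := by
  rw [← μ.sum_smul_dirac, ← ν.sum_smul_dirac, Measure.le_iff]
  intro s hs
  simp only [Measure.sum_apply _ hs, Measure.smul_apply, smul_eq_mul]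
  exact ENNReal.tsum_le_tsum fun x => mul_le_mul_left (h x) _

namespace Lp

variable {α E : Type*} [MeasurableSpace α] [NormedAddCommGroup E] {p : ℝ≥0∞} {μ : Measure α}
  {τ : α → α} {c : ℝ≥0∞}

theorem norm_le_of_ae_eq_comp (hτ : AEMeasurable τ μ) (hc : c ≠ ∞) (h : μ.map τ ≤ c • μ)
    {f g : Lp E p μ} (hg : g =ᵐ[μ] f ∘ τ) : ‖g‖ ≤ c.toReal ^ (1 / p).toReal * ‖f‖ := by
  have hf : AEStronglyMeasurable f (μ.map τ) :=
    (Lp.aestronglyMeasurable f).mono_ac (Measure.absolutelyContinuous_of_le_smul h)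
  rw [Lp.norm_def, Lp.norm_def, eLpNorm_congr_ae hg, ← eLpNorm_map_measure hf hτ,
    ENNReal.toReal_rpow, ← ENNReal.toReal_mul]
  exact ENNReal.toReal_mono (ENNReal.mul_ne_top (by simp [hc]) (Lp.eLpNorm_ne_top f))
    (eLpNorm_le_of_measure_le_smul h)

variable [NormedSpace ℝ E] [Fact (1 ≤ p)]

noncomputable def compOfMapLeSMul (hτ : Measurable τ) (hc : c ≠ ∞) (h : μ.map τ ≤ c • μ) :
    Lp E p μ →L[ℝ] Lp E p μ :=
  (compMeasurePreservingₗᵢ ℝ τ ⟨hτ, rfl⟩).toContinuousLinearMap ∘L LpToLpOfMeasureLeSMul hc h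

theorem coeFn_compOfMapLeSMul (hτ : Measurable τ) (hc : c ≠ ∞) (h : μ.map τ ≤ c • μ)
    (f : Lp E p μ) : compOfMapLeSMul hτ hc h f =ᵐ[μ] f ∘ τ :=
  (coeFn_compMeasurePreserving _ _).trans
    (ae_eq_comp hτ.aemeasurable (coeFn_LpToLpOfMeasureLeSMul hc h f))

end Lp
end MeasureTheory

theorem tendsto_partialSups_div_of_tendsto_div {u : ℕ → ℝ}
    (h : Tendsto (fun k : ℕ => u k / k) atTop (𝓝 0)) :
    Tendsto (fun k : ℕ => partialSups u k / k) atTop (𝓝 0) := by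
  refine tendsto_order.2 ⟨fun ε hε => ?_, fun ε hε => ?_⟩
  · filter_upwards [(tendsto_order.1 h).1 ε hε] with k hk
    exact hk.trans_le (div_le_div_of_nonneg_right (le_partialSups u k) k.cast_nonneg)
  · obtain ⟨J, hJ⟩ := eventually_atTop.1 ((tendsto_order.1 h).2 (ε / 2) (half_pos hε))
    have hPJ := (tendsto_order.1 (tendsto_const_div_atTop_nhds_zero_nat (partialSups u J))).2 ε hε
    filter_upwards [hPJ, eventually_ge_atTop (J + 1)] with k hPk hk
    have hk0 : (0 : ℝ) < k := by exact_mod_cast (by omega : 0 < k)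
    have hsplit : partialSups u k ≤ max (partialSups u J) (ε / 2 * k) := by
      refine partialSups_le _ _ _ fun j hj => ?_
      rcases le_or_gt j J with hjJ | hJj
      · exact (le_partialSups_of_le u hjJ).trans (le_max_left _ _)
      · have hj0 : (0 : ℝ) < j := by exact_mod_cast (by omega : 0 < j)
        have huj : u j < ε / 2 * j := (div_lt_iff₀ hj0).1 (hJ j hJj.le)
        have hjk : ε / 2 * j ≤ ε / 2 * k := by gcongr
        linarith [le_max_right (partialSups u J) (ε / 2 * k)]
    calc partialSups u k / k ≤ max (partialSups u J) (ε / 2 * k) / k := by gcongr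
      _ = max (partialSups u J / k) (ε / 2) := by
        rw [← max_div_div_right hk0.le, mul_div_cancel_right₀ _ hk0.ne']
      _ < ε := max_lt hPk (half_lt_self hε)

theorem tendsto_sqrt_mul_exp_rpow_inv {C : ℝ} (hC : 0 < C) {P : ℕ → ℝ}
    (hP : Tendsto (fun k : ℕ => P k / k) atTop (𝓝 0)) :
    Tendsto (fun k : ℕ => √(C * Real.exp (P k)) ^ (k : ℝ)⁻¹) atTop (𝓝 1) := by
  have hlog : ∀ k : ℕ, √(C * Real.exp (P k)) ^ (k : ℝ)⁻¹
      = Real.exp ((Real.log C * (k : ℝ)⁻¹ + P k / k) / 2) := by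
    intro k
    rw [Real.rpow_def_of_pos (by positivity), Real.log_sqrt (by positivity),
      Real.log_mul hC.ne' (Real.exp_pos _).ne', Real.log_exp]
    ring_nf
  simp only [hlog]
  have h0 := ((tendsto_inv_atTop_nhds_zero_nat.const_mul (Real.log C)).add hP).div_const 2
  rw [mul_zero, add_zero, zero_div] at h0
  rw [← Real.exp_zero]
  exact (Real.continuous_exp.tendsto 0).comp h0

theorem le_exp_partialSups_abs_log {b : ℕ → ℝ} (hb : ∀ k, 0 < b k) {j k : ℕ} (hjk : j ≤ k) :
    b j ≤ Real.exp (partialSups (fun i => |Real.log (b i)|) k) :=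
  calc b j = Real.exp (Real.log (b j)) := (Real.exp_log (hb j)).symm
    _ ≤ Real.exp (partialSups (fun i => |Real.log (b i)|) k) :=
      Real.exp_le_exp.2 <|
        (le_abs_self _).trans (le_partialSups_of_le (fun i => |Real.log (b i)|) hjk)

theorem apply_natAbs_sub_le {a b : ℕ → ℝ} {C : ℝ} (ha : ∀ k, 0 < a k) (hC : 0 < C)
    (hb : ∀ k, 0 < b k) (hab : ∀ k l : ℕ, a k / a l ≤ C * b (Nat.dist k l)) (n : ℤ) (k : ℕ) :
    a (n - k).natAbs ≤ C * Real.exp (partialSups (fun i => |Real.log (b i)|) k) * a n.natAbs := by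
  have hdist : Nat.dist (n - k).natAbs n.natAbs ≤ k := by
    simp only [Nat.dist]
    omega
  rw [← div_le_iff₀ (ha _)]
  exact (hab _ _).trans (mul_le_mul_of_nonneg_left (le_exp_partialSups_abs_log hb hdist) hC.le)

section muA

theorem muA_singleton (a : ℕ → ℝ) (n : ℤ) : muA a {n} = ENNReal.ofReal (a n.natAbs) :=
  Measure.sum_smul_dirac_singleton

noncomputable def singleLp (a : ℕ → ℝ) (m : ℤ) : Lp ℝ 2 (muA a) :=
  indicatorConstLp 2 (measurableSet_singleton m) (by simp [muA_singleton]) 1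

variable {a : ℕ → ℝ}

theorem ae_muA (ha : ∀ k, 0 < a k) : ae (muA a) = ⊤ :=
  ae_eq_top.2 fun n => by simp [muA_singleton, ha n.natAbs]

theorem eventuallyEq_muA_iff (ha : ∀ k, 0 < a k) {β : Type*} {f g : ℤ → β} :
    f =ᵐ[muA a] g ↔ f = g := by
  rw [EventuallyEq, ae_muA ha, eventually_top, funext_iff]

theorem map_add_muA_le (ha : ∀ k, 0 ≤ a k) {k : ℤ} {D : ℝ}
    (hD : ∀ n : ℤ, a (n - k).natAbs ≤ D * a n.natAbs) :
    (muA a).map (· + k) ≤ ENNReal.ofReal D • muA a := by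
  refine Measure.le_of_forall_singleton_le fun n => ?_
  rw [Measure.map_apply (measurable_add_const k) (measurableSet_singleton n),
    Set.preimage_add_right_singleton, Measure.smul_apply, muA_singleton, muA_singleton,
    smul_eq_mul, ← ENNReal.ofReal_mul' (ha _)]
  exact ENNReal.ofReal_le_ofReal (hD n)

theorem coeFn_singleLp (ha : ∀ k, 0 < a k) (m : ℤ) :
    ⇑(singleLp a m) = Set.indicator {m} fun _ => 1 :=
  (eventuallyEq_muA_iff ha).1 indicatorConstLp_coeFn

theorem norm_singleLp (ha : ∀ k, 0 < a k) (m : ℤ) : ‖singleLp a m‖ = √(a m.natAbs) := by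
  rw [singleLp, norm_indicatorConstLp two_ne_zero ENNReal.ofNat_ne_top, measureReal_def,
    muA_singleton, ENNReal.toReal_ofReal (ha _).le, Real.sqrt_eq_rpow]
  norm_num

end muA

section shift

variable {a : ℕ → ℝ} {T : Lp ℝ 2 (muA a) →L[ℝ] Lp ℝ 2 (muA a)}

theorem coeFn_pow_apply_of_shift (hT : ∀ f, ⇑(T f) = fun n => f (n + 1)) (k : ℕ)
    (f : Lp ℝ 2 (muA a)) : ⇑((T ^ k) f) = fun n => f (n + k) := by
  induction k generalizing f with
  | zero => simp
  | succ k ih =>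
    rw [pow_succ, mul_apply_eq_comp, ih, hT]
    push_cast
    simp only [add_assoc]

theorem norm_pow_le_of_shift (ha : ∀ k, 0 < a k) (hT : ∀ f, ⇑(T f) = fun n => f (n + 1))
    {k : ℕ} {D : ℝ} (hD0 : 0 ≤ D) (hD : ∀ n : ℤ, a (n - k).natAbs ≤ D * a n.natAbs) :
    ‖T ^ k‖ ≤ √D := by
  refine ContinuousLinearMap.opNorm_le_bound _ (Real.sqrt_nonneg D) fun f => ?_
  have h := Lp.norm_le_of_ae_eq_comp (measurable_add_const (k : ℤ)).aemeasurable
    ENNReal.ofReal_ne_top (map_add_muA_le (fun k => (ha k).le) hD)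
    (f := f) (g := (T ^ k) f) ((eventuallyEq_muA_iff ha).2 (coeFn_pow_apply_of_shift hT k f))
  rwa [ENNReal.toReal_ofReal hD0, ENNReal.toReal_div, ENNReal.toReal_one, ENNReal.toReal_ofNat,
    ← Real.sqrt_eq_rpow] at h

theorem one_lt_norm_pow_of_shift (ha : ∀ k, 0 < a k) (hanti : StrictAnti a)
    (hT : ∀ f, ⇑(T f) = fun n => f (n + 1)) {k : ℕ} (hk : 1 ≤ k) : 1 < ‖T ^ k‖ := by
  have hTk : (T ^ k) (singleLp a k) = singleLp a 0 := by
    refine Lp.ext ((eventuallyEq_muA_iff ha).2 ?_)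
    rw [coeFn_pow_apply_of_shift hT, coeFn_singleLp ha, coeFn_singleLp ha]
    ext n
    simp [Set.indicator_apply]
  have hlt : √(a k) < √(a 0) := Real.sqrt_lt_sqrt (ha k).le (hanti (by omega))
  have hle := (T ^ k).le_opNorm (singleLp a k)
  rw [hTk, norm_singleLp ha, norm_singleLp ha] at hle
  simp only [Int.natAbs_zero, Int.natAbs_natCast] at hle
  exact (lt_mul_iff_one_lt_left (Real.sqrt_pos.2 (ha k))).1 (hlt.trans_le hle)

end shift

theorem stmt7_general (a : ℕ → ℝ) (ha : ∀ k, 0 < a k) (hanti : StrictAnti a)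
    (C : ℝ) (hC : 0 < C) (b : ℕ → ℝ) (hb : ∀ k, 0 < b k)
    (hbsub : Tendsto (fun k : ℕ => |Real.log (b k)| / (k : ℝ)) atTop (𝓝 0))
    (hab : ∀ k l : ℕ, a k / a l ≤ C * b (Nat.dist k l)) :
    ∃ T : Lp ℝ 2 (muA a) →L[ℝ] Lp ℝ 2 (muA a),
      (∀ f : Lp ℝ 2 (muA a), (T f : ℤ → ℝ) =ᵐ[muA a] fun n => f (n + 1)) ∧
      (∀ k : ℕ, 1 ≤ k → 1 < ‖T ^ k‖) ∧
      Tendsto (fun k : ℕ => ‖T ^ k‖ ^ ((k : ℝ)⁻¹)) atTop (𝓝 1) := by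
  set P := partialSups fun j => |Real.log (b j)|
  have hD : ∀ k : ℕ, ∀ n : ℤ, a (n - k).natAbs ≤ C * Real.exp (P k) * a n.natAbs :=
    fun k n => apply_natAbs_sub_le ha hC hb hab n k
  have hD1 : ∀ n : ℤ, a (n - 1).natAbs ≤ C * Real.exp (P 1) * a n.natAbs := by
    simpa using hD 1
  let T : Lp ℝ 2 (muA a) →L[ℝ] Lp ℝ 2 (muA a) := Lp.compOfMapLeSMul (measurable_add_const 1)
    ENNReal.ofReal_ne_top (map_add_muA_le (fun k => (ha k).le) hD1)
  have hT : ∀ f, (T f : ℤ → ℝ) = fun n => f (n + 1) :=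
    fun f => (eventuallyEq_muA_iff ha).1 (Lp.coeFn_compOfMapLeSMul _ _ _ f)
  refine ⟨T, fun f => (eventuallyEq_muA_iff ha).2 (hT f),
    fun k hk => one_lt_norm_pow_of_shift ha hanti hT hk, ?_⟩
  refine tendsto_of_tendsto_of_tendsto_of_le_of_le' tendsto_const_nhds
    (tendsto_sqrt_mul_exp_rpow_inv hC (tendsto_partialSups_div_of_tendsto_div hbsub)) ?_ ?_
  · filter_upwards [eventually_ge_atTop 1] with k hk
    exact Real.one_le_rpow (one_lt_norm_pow_of_shift ha hanti hT hk).le (by positivity)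
  · filter_upwards with k
    exact Real.rpow_le_rpow (norm_nonneg _) (norm_pow_le_of_shift ha hT (by positivity) (hD k))
      (by positivity)

/-- if `𝐚 = (aₖ)` sub-exponentially decreases to `0`, then the left-shift
is a bounded linear operator `T` on `ℍ_𝐚`, with `‖Tᵏ‖ > 1` for every `k ≥ 1` and
spectral radius `lim_k ‖Tᵏ‖^{1/k} = 1`. -/
theorem stmt7 (a : ℕ → ℝ) (ha : ∀ k, 0 < a k) (hanti : StrictAnti a)
    (ha0 : Tendsto a atTop (𝓝 0))
    (C : ℝ) (hC : 0 < C) (b : ℕ → ℝ) (hb : ∀ k, 0 < b k)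
    (hbsub : Tendsto (fun k : ℕ => |Real.log (b k)| / (k : ℝ)) atTop (𝓝 0))
    (hab : ∀ k l : ℕ, a k / a l ≤ C * b (Nat.dist k l)) :
    ∃ T : Lp ℝ 2 (muA a) →L[ℝ] Lp ℝ 2 (muA a),
      (∀ f : Lp ℝ 2 (muA a), (T f : ℤ → ℝ) =ᵐ[muA a] fun n => f (n + 1)) ∧
      (∀ k : ℕ, 1 ≤ k → 1 < ‖T ^ k‖) ∧
      Tendsto (fun k : ℕ => ‖T ^ k‖ ^ ((k : ℝ)⁻¹)) atTop (𝓝 1) :=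
  stmt7_general a ha hanti C hC b hb hbsub hab
end

section
/- Let $(X,d)$ be a compact metric space, $T$ a homeomorphism, $\delta>0$, and let $(\beta_i)_{i\ge 1}$ be an increasing sequence of finite Borel partitions ($\beta_1\prec\beta_2\prec\cdots$) with $\operatorname{diam}(\beta_1)\le\delta$, $\operatorname{diam}(T\beta_1)\le\delta$, and $\operatorname{diam}(\beta_i)\to 0$. Let $(k_i)_{i\ge 1}$ be nonnegative integers with $k_1=0$, set $\alpha_q := \bigvee_{p=1}^q T^{k_p}\beta_p$, $\mathcal{P} := \bigvee_{p=1}^{\infty}\alpha_p$, and $\xi := \mathcal{P}^- = \bigvee_{n\ge 1} T^n\mathcal{P}$. Then for every $x\in X$, the closure $\overline{\xi(x)}$ of the atom of $\xi$ containing $x$ is contained in the $\delta$-unstable set $W^u_\delta(x,T)$. -/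
/-!
For `m > k p` the map `T⁻ᵐ` sends the atom `ξ(x)` into the `β p`-atom of `T⁻ᵐ x`, and by
continuity it sends the closure of `ξ(x)` into the closure of that atom. Hence
`d(T⁻ᵐ x, T⁻ᵐ y) ≤ diam (β p)` for every `y` in the closure of `ξ(x)`. Taking `p = 0` (where
`k 0 = 0`) gives the bound `δ` for `m ≥ 1`, and, read through `T`, also for `m = 0`; letting
`p → ∞` gives `d(T⁻ᵐ x, T⁻ᵐ y) → 0`.
-/

open MeasureTheory Filter Set Topology

/-- The `δ`-unstable set of `x` for the homeomorphism with inverse `Tinv`: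
`W^u_δ(x,T) = {y : d(T⁻ⁿx, T⁻ⁿy) ≤ δ for all n ≥ 0 and d(T⁻ⁿx,T⁻ⁿy) → 0}`. -/
def unstableSet {X : Type*} [PseudoMetricSpace X] (Tinv : X → X) (δ : ℝ) (x : X) : Set X :=
  {y | (∀ n : ℕ, dist (Tinv^[n] x) (Tinv^[n] y) ≤ δ) ∧
    Tendsto (fun n : ℕ => dist (Tinv^[n] x) (Tinv^[n] y)) atTop (𝓝 0)}

open Function Metric

section PastAtom

variable {X ι : Type*}

/-- The atom of `ξ = 𝒫⁻` containing `x`, for the inverse map `Tinv`. -/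
def pastAtom (Tinv : X → X) (β : ℕ → X → ι) (k : ℕ → ℕ) (x : X) : Set X :=
  {y | ∀ n, 1 ≤ n → ∀ p, β p (Tinv^[k p + n] y) = β p (Tinv^[k p + n] x)}

theorem mapsTo_iterate_pastAtom {Tinv : X → X} {β : ℕ → X → ι} {k : ℕ → ℕ} {x : X} {p m : ℕ}
    (hm : k p < m) :
    MapsTo Tinv^[m] (pastAtom Tinv β k x) (β p ⁻¹' {β p (Tinv^[m] x)}) := by
  intro z hz
  have h := hz (m - k p) (by omega) p
  rwa [Nat.add_sub_cancel' hm.le] at h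

theorem iterate_mem_closure_of_mem_closure_pastAtom [TopologicalSpace X] {Tinv : X → X}
    (hTinv : Continuous Tinv) {β : ℕ → X → ι} {k : ℕ → ℕ} {x y : X} {p m : ℕ}
    (hy : y ∈ closure (pastAtom Tinv β k x)) (hm : k p < m) :
    Tinv^[m] y ∈ closure (β p ⁻¹' {β p (Tinv^[m] x)}) :=
  (mapsTo_iterate_pastAtom hm).closure (hTinv.iterate m) hy

variable [PseudoMetricSpace X] [BoundedSpace X]

theorem dist_le_diam_of_mem_closure {s : Set X} {x y : X} (hx : x ∈ closure s)
    (hy : y ∈ closure s) : dist x y ≤ diam s :=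
  diam_closure s ▸ dist_le_diam_of_mem (Bornology.IsBounded.all _) hx hy

theorem dist_iterate_le_diam_of_mem_closure_pastAtom {Tinv : X → X} (hTinv : Continuous Tinv)
    {β : ℕ → X → ι} {k : ℕ → ℕ} {x y : X} {p m : ℕ}
    (hy : y ∈ closure (pastAtom Tinv β k x)) (hm : k p < m) :
    dist (Tinv^[m] x) (Tinv^[m] y) ≤ diam (β p ⁻¹' {β p (Tinv^[m] x)}) :=
  dist_le_diam_of_mem_closure (subset_closure rfl)
    (iterate_mem_closure_of_mem_closure_pastAtom hTinv hy hm)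

theorem dist_le_diam_image_of_mem_closure_pastAtom (T : X ≃ₜ X) {β : ℕ → X → ι} {k : ℕ → ℕ}
    (hk0 : k 0 = 0) {x y : X} (hy : y ∈ closure (pastAtom T.symm β k x)) :
    dist x y ≤ diam (T '' (β 0 ⁻¹' {β 0 (T.symm x)})) := by
  have hsub : pastAtom T.symm β k x ⊆ T '' (β 0 ⁻¹' {β 0 (T.symm x)}) := by
    rw [← T.preimage_symm]
    exact mapsTo_iterate_pastAtom (m := 1) (by omega)
  exact dist_le_diam_of_mem_closure (subset_closure ⟨T.symm x, rfl, T.apply_symm_apply x⟩)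
    (closure_mono hsub hy)

theorem tendsto_dist_iterate_of_mem_closure_pastAtom {Tinv : X → X} (hTinv : Continuous Tinv)
    {β : ℕ → X → ι} {k : ℕ → ℕ}
    (hdiam : ∀ ε : ℝ, 0 < ε → ∃ I : ℕ, ∀ i, I ≤ i → ∀ j, diam (β i ⁻¹' {j}) ≤ ε)
    {x y : X} (hy : y ∈ closure (pastAtom Tinv β k x)) :
    Tendsto (fun m : ℕ => dist (Tinv^[m] x) (Tinv^[m] y)) atTop (𝓝 0) := by
  rw [Metric.tendsto_atTop]
  intro ε hε
  obtain ⟨I, hI⟩ := hdiam (ε / 2) (half_pos hε)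
  refine ⟨k I + 1, fun m hm => ?_⟩
  have h := (dist_iterate_le_diam_of_mem_closure_pastAtom hTinv hy hm).trans (hI I le_rfl _)
  rw [Real.dist_0_eq_abs, abs_of_nonneg dist_nonneg]
  linarith

end PastAtom

/-- Finite Borel partitions are encoded as maps `βᵢ : X → ℕ`, 0-indexed (`β 0` is `β₁`). -/

theorem stmt16_general {X : Type*} [MetricSpace X] [CompactSpace X]
    (T : X ≃ₜ X) (δ : ℝ)
    (β : ℕ → X → ℕ)
    (hdiam0 : ∀ j, Metric.diam ((β 0) ⁻¹' {j}) ≤ δ)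
    (hdiamT : ∀ j, Metric.diam ((⇑T) '' ((β 0) ⁻¹' {j})) ≤ δ)
    (hdiam : ∀ ε : ℝ, 0 < ε → ∃ I : ℕ, ∀ i, I ≤ i → ∀ j, Metric.diam ((β i) ⁻¹' {j}) ≤ ε)
    (k : ℕ → ℕ) (hk0 : k 0 = 0) (x : X) :
    closure {y | ∀ n, 1 ≤ n → ∀ p,
        β p ((⇑T.symm)^[k p + n] y) = β p ((⇑T.symm)^[k p + n] x)} ⊆
      unstableSet (⇑T.symm) δ x := by
  intro y (hy : y ∈ closure (pastAtom T.symm β k x))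
  refine ⟨fun n => ?_, tendsto_dist_iterate_of_mem_closure_pastAtom T.continuous_symm hdiam hy⟩
  cases n with
  | zero => exact (dist_le_diam_image_of_mem_closure_pastAtom T hk0 hy).trans (hdiamT _)
  | succ n =>
    exact (dist_iterate_le_diam_of_mem_closure_pastAtom T.continuous_symm hy
      (by omega : k 0 < n + 1)).trans (hdiam0 _)

/-- the measurable partition `ξ = 𝒫⁻` built from the increasing sequence
of finite Borel partitions `βᵢ` (0-indexed here: `β 0` plays the role of `β₁`) and the
shifts `kᵢ` (with `k 0 = 0`) is subordinate to local unstable sets: the closure of each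
atom `ξ(x)` is contained in `W^u_δ(x,T)`.  Finite Borel partitions are encoded as Borel
measurable maps `βᵢ : X → ℕ` with finite range, and the atom of `ξ` containing `x` is
`{y : ∀ n ≥ 1, ∀ p, β p (T^{-(k p + n)} y) = β p (T^{-(k p + n)} x)}`. -/
theorem stmt16 {X : Type*} [MetricSpace X] [CompactSpace X] [MeasurableSpace X] [BorelSpace X]
    (T : X ≃ₜ X) (δ : ℝ) (hδ : 0 < δ)
    (β : ℕ → X → ℕ) (hβmeas : ∀ i, Measurable (β i)) (hβfin : ∀ i, (Set.range (β i)).Finite)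
    (hmono : ∀ i x y, β (i + 1) x = β (i + 1) y → β i x = β i y)
    (hdiam0 : ∀ j, Metric.diam ((β 0) ⁻¹' {j}) ≤ δ)
    (hdiamT : ∀ j, Metric.diam ((⇑T) '' ((β 0) ⁻¹' {j})) ≤ δ)
    (hdiam : ∀ ε : ℝ, 0 < ε → ∃ I : ℕ, ∀ i, I ≤ i → ∀ j, Metric.diam ((β i) ⁻¹' {j}) ≤ ε)
    (k : ℕ → ℕ) (hk0 : k 0 = 0) (x : X) :
    closure {y | ∀ n, 1 ≤ n → ∀ p,
        β p ((⇑T.symm)^[k p + n] y) = β p ((⇑T.symm)^[k p + n] x)} ⊆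
      unstableSet (⇑T.symm) δ x :=
  stmt16_general T δ β hdiam0 hdiamT hdiam k hk0 x
end
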